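/- For every integer n ≥ 1 and k ≥ 1: if k ≥ ⌈n/2⌉ then ν_k(K_n) = 0 (K_n embeds in a book with ⌈n/2⌉ pages), and conversely if n ≥ 4 and k < ⌈n/2⌉ then ν_k(K_n) > 0; in other words, for n ≥ 4 the pagenumber of K_n is ⌈n/2⌉. -/

import Mathlib

/-- The edges of the complete graph `K_n` with vertices `0, 1, …, n-1` on the spine,
represented as ordered pairs `(a, b)` with `a < b < n`. -/
def knEdges (n : ℕ) : Finset (ℕ × ℕ) :=
  (Finset.range n ×ˢ Finset.range n).filter (fun p => p.1 < p.2)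

/-- Given a page assignment `σ` of the edges of `K_n`, the number of (unordered) pairs of
edges that cross: two edges `(a,b)` and `(c,d)` (with `a<b`, `c<d`) cross iff they lie on the
same page and `a<c<b<d` or `c<a<d<b`; each crossing pair is counted once. -/
def pageCrossings (n : ℕ) (σ : ℕ × ℕ → ℕ) : ℕ :=
  ((knEdges n ×ˢ knEdges n).filter
    (fun p => σ p.1 = σ p.2 ∧ p.1.1 < p.2.1 ∧ p.2.1 < p.1.2 ∧ p.1.2 < p.2.2)).card

/-- The `k`-page crossing number of `K_n`: the minimum number of crossings over all
assignments of the edges of `K_n` to `k` pages. -/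
noncomputable def nuK (k n : ℕ) : ℕ :=
  sInf { m | ∃ σ : ℕ × ℕ → ℕ, (∀ e ∈ knEdges n, σ e < k) ∧ pageCrossings n σ = m }

def NC (F : Finset (ℕ × ℕ)) : Prop :=
  ∀ e ∈ F, ∀ f ∈ F, ¬(e.1 < f.1 ∧ f.1 < e.2 ∧ e.2 < f.2)

lemma NC_mono {F G : Finset (ℕ × ℕ)} (h : F ⊆ G) (hG : NC G) : NC F :=
  fun e he f hf => hG e (h he) f (h hf)

set_option maxHeartbeats 800000 in
lemma key : ∀ (N i j : ℕ) (F : Finset (ℕ × ℕ)),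
    j ≤ i + N →
    (∀ e ∈ F, i ≤ e.1 ∧ e.1 + 2 ≤ e.2 ∧ e.2 ≤ j) →
    NC F → (i, j) ∉ F → F.card ≤ j - i - 2 := by
  intro N
  induction N with
  | zero =>
    intro i j F hN hF _ _
    have hFe : F = ∅ := Finset.eq_empty_of_forall_notMem fun e he => by
      have := hF e he; omega
    simp [hFe]
  | succ N ih =>
    intro i j F hN hF hNC hij
    rcases F.eq_empty_or_nonempty with rfl | hne
    · simp
    by_cases hi : ∃ d, (i, d) ∈ F
    · have hSne : ((F.filter (fun e => e.1 = i)).image Prod.snd).Nonempty := by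
        obtain ⟨d, hd⟩ := hi
        exact ⟨d, Finset.mem_image.mpr ⟨(i, d), Finset.mem_filter.mpr ⟨hd, rfl⟩, rfl⟩⟩
      obtain ⟨m, hmF, hmax⟩ : ∃ m, (i, m) ∈ F ∧ ∀ d, (i, d) ∈ F → d ≤ m := by
        refine ⟨((F.filter (fun e => e.1 = i)).image Prod.snd).max' hSne, ?_, ?_⟩
        · have h := ((F.filter (fun e => e.1 = i)).image Prod.snd).max'_mem hSne
          rw [Finset.mem_image] at h
          obtain ⟨⟨x, y⟩, hxy, h2⟩ := h
          rw [Finset.mem_filter] at hxy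
          obtain ⟨hxyF, hx⟩ := hxy
          simp only at hx h2
          subst hx; subst h2; exact hxyF
        · intro d hd
          apply Finset.le_max'
          exact Finset.mem_image.mpr ⟨(i, d), Finset.mem_filter.mpr ⟨hd, rfl⟩, rfl⟩
      have hm2 : i + 2 ≤ m := (hF _ hmF).2.1
      have hmj : m ≤ j := (hF _ hmF).2.2
      have hmj' : m < j := lt_of_le_of_ne hmj (by rintro rfl; exact hij hmF)
      have hsplit : ∀ e ∈ F, e.2 ≤ m ∨ m ≤ e.1 := by
        intro e he
        by_contra hc
        push_neg at hc
        obtain ⟨h1, h2⟩ := hc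
        rcases Nat.lt_or_ge i e.1 with h3 | h3
        · exact hNC (i, m) hmF e he ⟨h3, h2, h1⟩
        · have hei : e.1 = i := le_antisymm h3 (hF e he).1
          have : (i, e.2) ∈ F := by rw [← hei]; exact he
          have := hmax e.2 this
          omega
      have hcard : F.card ≤ (F.filter (fun e => e.2 ≤ m)).card
          + (F.filter (fun e => m ≤ e.1)).card := by
        refine le_trans (Finset.card_le_card ?_) (Finset.card_union_le _ _)
        intro e he
        rcases hsplit e he with h | h
        · exact Finset.mem_union_left _ (Finset.mem_filter.mpr ⟨he, h⟩)
        · exact Finset.mem_union_right _ (Finset.mem_filter.mpr ⟨he, h⟩)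
      have h1 : (F.filter (fun e => e.2 ≤ m)).card ≤ m - i - 1 := by
        have hkey := ih i m ((F.filter (fun e => e.2 ≤ m)).erase (i, m)) (by omega)
          (fun e he => by
            have he' := Finset.mem_of_mem_erase he
            rw [Finset.mem_filter] at he'
            exact ⟨(hF e he'.1).1, (hF e he'.1).2.1, he'.2⟩)
          (NC_mono ((Finset.erase_subset _ _).trans (Finset.filter_subset _ _)) hNC)
          (Finset.notMem_erase _ _)
        have hsub : (F.filter (fun e => e.2 ≤ m)) ⊆
            insert (i, m) ((F.filter (fun e => e.2 ≤ m)).erase (i, m)) :=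
          Finset.subset_insert_iff.mpr (Finset.Subset.refl _)
        have := (Finset.card_le_card hsub).trans (Finset.card_insert_le _ _)
        omega
      have h2 : (F.filter (fun e => m ≤ e.1)).card ≤ j - m - 1 := by
        have hkey := ih m j ((F.filter (fun e => m ≤ e.1)).erase (m, j)) (by omega)
          (fun e he => by
            have he' := Finset.mem_of_mem_erase he
            rw [Finset.mem_filter] at he'
            exact ⟨he'.2, (hF e he'.1).2.1, (hF e he'.1).2.2⟩)
          (NC_mono ((Finset.erase_subset _ _).trans (Finset.filter_subset _ _)) hNC)
          (Finset.notMem_erase _ _)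
        by_cases hmem : (m, j) ∈ F.filter (fun e => m ≤ e.1)
        · have hmj2 : m + 2 ≤ j := (hF _ (Finset.mem_filter.mp hmem).1).2.1
          have hsub : (F.filter (fun e => m ≤ e.1)) ⊆
              insert (m, j) ((F.filter (fun e => m ≤ e.1)).erase (m, j)) :=
            Finset.subset_insert_iff.mpr (Finset.Subset.refl _)
          have := (Finset.card_le_card hsub).trans (Finset.card_insert_le _ _)
          omega
        · rw [Finset.erase_eq_of_notMem hmem] at hkey
          omega
      omega
    · push_neg at hi
      obtain ⟨⟨a, b⟩, he0⟩ := hne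
      have hall : ∀ e ∈ F, i + 1 ≤ e.1 := by
        rintro ⟨c, d⟩ he
        have h := (hF _ he).1
        rcases eq_or_lt_of_le h with h' | h'
        · exact absurd (show (i, d) ∈ F by rw [show i = c from h']; exact he) (hi d)
        · omega
      have hj : i + 3 ≤ j := by
        have := hF _ he0
        have := hall _ he0
        simp only at *
        omega
      have hkey := ih (i + 1) j (F.erase (i + 1, j)) (by omega)
        (fun e he => by
          have he' := Finset.mem_of_mem_erase he
          exact ⟨hall e he', (hF e he').2.1, (hF e he').2.2⟩)
        (NC_mono (Finset.erase_subset _ _) hNC)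
        (Finset.notMem_erase _ _)
      have hsub : F ⊆ insert (i + 1, j) (F.erase (i + 1, j)) :=
        Finset.subset_insert_iff.mpr (Finset.Subset.refl _)
      have := (Finset.card_le_card hsub).trans (Finset.card_insert_le _ _)
      omega


lemma mem_knEdges {n : ℕ} {e : ℕ × ℕ} : e ∈ knEdges n ↔ e.1 < e.2 ∧ e.2 < n := by
  rcases e with ⟨a, b⟩
  simp [knEdges, Finset.mem_filter, Finset.mem_product]
  omega

lemma knEdges_card (n : ℕ) : 2 * (knEdges n).card = n * (n - 1) := by
  have h := Finset.card_eq_sum_card_fiberwise (s := knEdges n) (t := Finset.range n)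
    (f := Prod.snd) (fun e he => by
      rw [Finset.mem_coe, mem_knEdges] at he; exact Finset.mem_range.mpr he.2)
  have h2 : ∀ b ∈ Finset.range n, ((knEdges n).filter (fun e => e.2 = b)).card = b := by
    intro b hb
    rw [Finset.mem_range] at hb
    have he : (knEdges n).filter (fun e => e.2 = b) = (Finset.range b).image (fun a => (a, b)) := by
      ext ⟨x, y⟩
      rw [Finset.mem_filter, mem_knEdges, Finset.mem_image]
      constructor
      · rintro ⟨⟨h1, h2⟩, h3⟩
        refine ⟨x, Finset.mem_range.mpr ?_, ?_⟩
        · have hx : x < y := h1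
          have hy : y = b := h3
          omega
        · have hy : y = b := h3
          rw [hy]
      · rintro ⟨a, ha, h2⟩
        rw [Finset.mem_range] at ha
        obtain ⟨h3, h4⟩ := Prod.mk.injEq .. ▸ Prod.ext_iff.mp h2
        refine ⟨⟨?_, ?_⟩, ?_⟩ <;> simp only <;> omega
    rw [he, Finset.card_image_of_injective _ (fun a a' hh => (Prod.ext_iff.mp hh).1),
      Finset.card_range]
  rw [h, Finset.sum_congr rfl h2, mul_comm]
  exact Finset.sum_range_id_mul_two n

theorem pagenumber_complete_graph (n k : ℕ) (hn : 1 ≤ n) (hk : 1 ≤ k) :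
    ((n + 1) / 2 ≤ k → nuK k n = 0) ∧
    (4 ≤ n → k < (n + 1) / 2 → 0 < nuK k n) := by
  constructor
  · intro hkn
    have hmem : 0 ∈ { m | ∃ σ : ℕ × ℕ → ℕ,
        (∀ e ∈ knEdges n, σ e < k) ∧ pageCrossings n σ = m } := by
      refine ⟨fun p => ((p.1 + p.2) % n) / 2, fun e _ => ?_, ?_⟩
      · show ((e.1 + e.2) % n) / 2 < k
        have : (e.1 + e.2) % n < n := Nat.mod_lt _ (by omega)
        omega
      · rw [pageCrossings, Finset.card_eq_zero, Finset.filter_eq_empty_iff]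
        rintro ⟨⟨a, b⟩, ⟨c, d⟩⟩ hp
        rw [Finset.mem_product, mem_knEdges, mem_knEdges] at hp
        obtain ⟨⟨hab', hb'⟩, hcd', hd'⟩ := hp
        have hab : a < b := hab'
        have hb : b < n := hb'
        have hcd : c < d := hcd'
        have hd : d < n := hd'
        rintro ⟨hσ', h1', h2', h3'⟩
        have hσ : ((a + b) % n) / 2 = ((c + d) % n) / 2 := hσ'
        have h1 : a < c := h1'
        have h2 : c < b := h2'
        have h3 : b < d := h3'
        have e1 : (a + b) % n = a + b ∨ (a + b) % n + n = a + b := by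
          rcases Nat.lt_or_ge (a + b) n with h | h
          · left; exact Nat.mod_eq_of_lt h
          · right
            rw [Nat.mod_eq_sub_mod h, Nat.mod_eq_of_lt (by omega)]
            omega
        have e2 : (c + d) % n = c + d ∨ (c + d) % n + n = c + d := by
          rcases Nat.lt_or_ge (c + d) n with h | h
          · left; exact Nat.mod_eq_of_lt h
          · right
            rw [Nat.mod_eq_sub_mod h, Nat.mod_eq_of_lt (by omega)]
            omega
        omega
    exact Nat.sInf_eq_zero.mpr (Or.inl hmem)
  · intro hn4 hklt
    rcases Nat.eq_zero_or_pos (nuK k n) with h0 | h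
    swap
    · exact h
    exfalso
    have hne : { m | ∃ σ : ℕ × ℕ → ℕ,
        (∀ e ∈ knEdges n, σ e < k) ∧ pageCrossings n σ = m }.Nonempty :=
      ⟨pageCrossings n (fun _ => 0), (fun _ => 0), fun e _ => hk, rfl⟩
    have hmem := Nat.sInf_mem hne
    rw [← nuK, h0] at hmem
    obtain ⟨σ, hσb, hσ0⟩ := hmem
    have hNCp : ∀ e ∈ knEdges n, ∀ f ∈ knEdges n, σ e = σ f →
        ¬(e.1 < f.1 ∧ f.1 < e.2 ∧ e.2 < f.2) := by
      intro e he f hf hs hcross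
      rw [pageCrossings, Finset.card_eq_zero, Finset.filter_eq_empty_iff] at hσ0
      have h' := hσ0 (show (e, f) ∈ knEdges n ×ˢ knEdges n from Finset.mem_product.mpr ⟨he, hf⟩)
      exact h' ⟨hs, hcross⟩
    -- per-page bound on diagonals
    have hpage : ∀ p, ((knEdges n).filter (fun e => σ e = p ∧
        ¬(e.2 = e.1 + 1 ∨ e = (0, n - 1)))).card ≤ n - 3 := by
      intro p
      have := key n 0 (n - 1) ((knEdges n).filter (fun e => σ e = p ∧
          ¬(e.2 = e.1 + 1 ∨ e = (0, n - 1))))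
        (by omega)
        (fun e he => by
          rw [Finset.mem_filter] at he
          obtain ⟨he1, _, he3⟩ := he
          rw [mem_knEdges] at he1
          push_neg at he3
          rcases e with ⟨a, b⟩
          simp only [Prod.mk.injEq, not_and] at he3 ⊢
          obtain ⟨he3a, _⟩ := he3
          simp only at he1 he3a
          omega)
        (fun e he f hf => by
          rw [Finset.mem_filter] at he hf
          exact hNCp e he.1 f hf.1 (he.2.1.trans hf.2.1.symm))
        (fun hc => by
          rw [Finset.mem_filter] at hc
          exact hc.2.2 (Or.inr rfl))
      omega
    -- sum over pages
    have hfib := Finset.card_eq_sum_card_fiberwise (s := knEdges n) (t := Finset.range k)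
      (f := σ) (fun e he => Finset.mem_range.mpr (hσb e he))
    have hBfib := Finset.card_eq_sum_card_fiberwise
      (s := (knEdges n).filter (fun e => e.2 = e.1 + 1 ∨ e = (0, n - 1)))
      (t := Finset.range k) (f := σ)
      (fun e he => Finset.mem_range.mpr (hσb e (Finset.mem_of_mem_filter e he)))
    -- boundary count
    have hB : ((knEdges n).filter (fun e => e.2 = e.1 + 1 ∨ e = (0, n - 1))).card ≤ n := by
      have hsub : (knEdges n).filter (fun e => e.2 = e.1 + 1 ∨ e = (0, n - 1)) ⊆
          insert (0, n - 1) ((Finset.range (n - 1)).image (fun a => (a, a + 1))) := by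
        rintro ⟨x, y⟩ hxy
        rw [Finset.mem_filter, mem_knEdges] at hxy
        obtain ⟨⟨h1, h2⟩, h3⟩ := hxy
        simp only at h1 h2
        rcases h3 with h3 | h3
        · simp only at h3
          refine Finset.mem_insert_of_mem (Finset.mem_image.mpr ⟨x, Finset.mem_range.mpr ?_, ?_⟩)
          · omega
          · rw [h3]
        · exact h3 ▸ Finset.mem_insert_self _ _
      calc ((knEdges n).filter (fun e => e.2 = e.1 + 1 ∨ e = (0, n - 1))).card
          ≤ _ := Finset.card_le_card hsub
        _ ≤ ((Finset.range (n - 1)).image (fun a => (a, a + 1))).card + 1 :=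
            Finset.card_insert_le _ _
        _ ≤ (n - 1) + 1 := by
            have := Finset.card_image_le (s := Finset.range (n - 1)) (f := fun a => (a, a + 1))
            rw [Finset.card_range] at this
            omega
        _ ≤ n := by omega
    -- combine
    have hsplit : ∀ p ∈ Finset.range k,
        ((knEdges n).filter (fun e => σ e = p)).card ≤
          (n - 3) + (((knEdges n).filter (fun e => e.2 = e.1 + 1 ∨ e = (0, n - 1))).filter
            (fun e => σ e = p)).card := by
      intro p _
      have heq := Finset.card_filter_add_card_filter_not
        (s := (knEdges n).filter (fun e => σ e = p))
        (p := fun e => e.2 = e.1 + 1 ∨ e = (0, n - 1))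
      have e1 : ((knEdges n).filter (fun e => σ e = p)).filter
          (fun e => ¬(e.2 = e.1 + 1 ∨ e = (0, n - 1)))
          = (knEdges n).filter (fun e => σ e = p ∧ ¬(e.2 = e.1 + 1 ∨ e = (0, n - 1))) := by
        rw [Finset.filter_filter]
      have e2 : ((knEdges n).filter (fun e => σ e = p)).filter
          (fun e => e.2 = e.1 + 1 ∨ e = (0, n - 1))
          = ((knEdges n).filter (fun e => e.2 = e.1 + 1 ∨ e = (0, n - 1))).filter
            (fun e => σ e = p) := by
        rw [Finset.filter_filter, Finset.filter_filter]
        apply Finset.filter_congr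
        intro e _
        simp [and_comm]
      have hp := hpage p
      rw [e1] at heq
      rw [e2] at heq
      omega
    have htot : (knEdges n).card ≤ k * (n - 3) + n := by
      calc (knEdges n).card = ∑ p ∈ Finset.range k,
            ((knEdges n).filter (fun e => σ e = p)).card := hfib
        _ ≤ ∑ p ∈ Finset.range k, ((n - 3) +
            (((knEdges n).filter (fun e => e.2 = e.1 + 1 ∨ e = (0, n - 1))).filter
              (fun e => σ e = p)).card) := Finset.sum_le_sum hsplit
        _ = k * (n - 3) + ∑ p ∈ Finset.range k,
            (((knEdges n).filter (fun e => e.2 = e.1 + 1 ∨ e = (0, n - 1))).filter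
              (fun e => σ e = p)).card := by
            rw [Finset.sum_add_distrib, Finset.sum_const, Finset.card_range, smul_eq_mul]
        _ ≤ k * (n - 3) + n := by rw [← hBfib]; omega
    have hcardn := knEdges_card n
    have h2k : 2 * k ≤ n - 1 := by omega
    obtain ⟨m, rfl⟩ : ∃ m, n = m + 4 := ⟨n - 4, by omega⟩
    have ha : (m + 4) * (m + 3) ≤ 2 * (k * (m + 1)) + 2 * (m + 4) := by
      have : m + 4 - 1 = m + 3 := by omega
      rw [this] at hcardn
      have : m + 4 - 3 = m + 1 := by omega
      rw [this] at htot
      omega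
    have hb2 : 2 * k ≤ m + 3 := by omega
    nlinarith [Nat.mul_le_mul_right (m + 1) hb2]
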